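/- In the quasi-ordinary setup below, assume ∑_{i=1}^{m_1} a_{11i} = 1. Let c be the least positive integer such that d_j := c · a_{11j} is an integer for every 1 ≤ j ≤ m_1 (so a_{11j} = d_j/c and ∑_j d_j = c). Then there exists r_0 > 0 such that for all 0 < r ≤ r_0 the tangent cone of Y_r at 0 equals {(x, y) ∈ ℂ^n × ℂ : y^c − f_1(0)^c ∏_{j=1}^{m_1} x_{1j}^{d_j} = 0}, where x = (x_{kj})_{k,j}. -/

import Mathlib

open Filter Topology

noncomputable section

/-- The monomial `M_k(t) = ∏ t_{ij}^{b_{kij}}`. -/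
def qoMonom {g : ℕ} (m : Fin g → ℕ) (b : Fin g → ((k : Fin g) × Fin (m k)) → ℕ)
    (k : Fin g) (t : ((k : Fin g) × Fin (m k)) → ℂ) : ℂ :=
  ∏ p : (k : Fin g) × Fin (m k), t p ^ b k p

/-- `φ(t) = ∑ M_k(t) f_k(t)`. -/
def qoPhi {g : ℕ} (m : Fin g → ℕ) (b : Fin g → ((k : Fin g) × Fin (m k)) → ℕ)
    (f : Fin g → (((k : Fin g) × Fin (m k)) → ℂ) → ℂ)
    (t : ((k : Fin g) × Fin (m k)) → ℂ) : ℂ :=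
  ∑ k, qoMonom m b k t * f k t

/-- `ξ_{kj}(t) = (∂φ/∂t_{kj})(t) / (c_{kj} t_{kj}^{c_{kj}-1})`. -/
def qoXi {g : ℕ} (m : Fin g → ℕ) (b : Fin g → ((k : Fin g) × Fin (m k)) → ℕ)
    (c : ((k : Fin g) × Fin (m k)) → ℕ)
    (f : Fin g → (((k : Fin g) × Fin (m k)) → ℂ) → ℂ)
    (t : ((k : Fin g) × Fin (m k)) → ℂ) (p : (k : Fin g) × Fin (m k)) : ℂ :=
  fderiv ℂ (qoPhi m b f) t (Pi.single p 1) / ((c p : ℂ) * t p ^ (c p - 1))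

lemma qoVec_ne {g : ℕ} {m : Fin g → ℕ} (v : ((k : Fin g) × Fin (m k)) → ℂ) :
    ((v, (-1 : ℂ)) : (((k : Fin g) × Fin (m k)) → ℂ) × ℂ) ≠ 0 := by
  simp [Prod.ext_iff]

instance {K V : Type*} [DivisionRing K] [AddCommGroup V] [Module K V] [TopologicalSpace V] :
    TopologicalSpace (Projectivization K V) :=
  inferInstanceAs (TopologicalSpace (Quotient (projectivizationSetoid K V)))

/-- The projectivized tangent map `G`. -/
def qoG {g : ℕ} (m : Fin g → ℕ) (b : Fin g → ((k : Fin g) × Fin (m k)) → ℕ)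
    (c : ((k : Fin g) × Fin (m k)) → ℕ)
    (f : Fin g → (((k : Fin g) × Fin (m k)) → ℂ) → ℂ)
    (t : ((k : Fin g) × Fin (m k)) → ℂ) :
    Projectivization ℂ ((((k : Fin g) × Fin (m k)) → ℂ) × ℂ) :=
  Projectivization.mk ℂ (fun p => qoXi m b c f t p, -1) (qoVec_ne _)

/-- The set of limits of tangents `Λ`. -/
def qoLambda {g : ℕ} (m : Fin g → ℕ) (b : Fin g → ((k : Fin g) × Fin (m k)) → ℕ)
    (c : ((k : Fin g) × Fin (m k)) → ℕ)
    (f : Fin g → (((k : Fin g) × Fin (m k)) → ℂ) → ℂ) :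
    Set (Projectivization ℂ ((((k : Fin g) × Fin (m k)) → ℂ) × ℂ)) :=
  {ℓ | ∃ t : ℕ → ((k : Fin g) × Fin (m k)) → ℂ,
    (∀ n p, t n p ≠ 0) ∧ Tendsto t atTop (𝓝 0) ∧
    Tendsto (fun n => qoG m b c f (t n)) atTop (𝓝 ℓ)}

/-- The exponent `a_{kij} = b_{kij}/c_{ij}`. -/
def qoExp {g : ℕ} (m : Fin g → ℕ) (b : Fin g → ((k : Fin g) × Fin (m k)) → ℕ)
    (c : ((k : Fin g) × Fin (m k)) → ℕ)
    (k : Fin g) (p : (k : Fin g) × Fin (m k)) : ℚ :=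
  (b k p : ℚ) / (c p : ℚ)

/-- The image `Y_r` of the polydisc of radius `r` under `t ↦ ((t_{kj}^{c_{kj}})_{kj}, φ(t))`. -/
def qoY {g : ℕ} (m : Fin g → ℕ) (b : Fin g → ((k : Fin g) × Fin (m k)) → ℕ)
    (c : ((k : Fin g) × Fin (m k)) → ℕ)
    (f : Fin g → (((k : Fin g) × Fin (m k)) → ℂ) → ℂ) (r : ℝ) :
    Set ((((k : Fin g) × Fin (m k)) → ℂ) × ℂ) :=
  (fun t => (fun p => t p ^ c p, qoPhi m b f t)) '' {t | ∀ p, ‖t p‖ < r}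

/-!
Since `M_1` divides every `M_k`, `φ = M_1 · u` with `u(0) = f_1(0) ≠ 0`. As
`b_{11j} / c_{1j} = d_j / c` and `∑ d_j = c`, writing `x = t^c` gives `M_1^c = ∏ x_{1j}^{d_j}`,
so on `s • Y_r` the function `y^c - f_1(0)^c ∏ x_{1j}^{d_j}` equals
`∏ x_{1j}^{d_j} · (u^c - f_1(0)^c)`, whose second factor tends to `0`: the tangent cone lies in
the zero set.

Conversely, a point `(x, y)` of the zero set is `(w^c, f_1(0) M_1(w))` for suitable roots `w`: the
`c_{1j}`-th roots of the `x_{1j}` can be twisted by roots of unity to reach every `c`-th root of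
`∏ x_{1j}^{d_j}` because `gcd (d_j) = 1`, which is the minimality of `c`. Since `M_1` is weighted
homogeneous of degree `∑ a_{11j} = 1`, `(x, y)` is the limit of `λ⁻¹ Φ(λ^{1/c_{kj}} w_{kj})` as
`λ → 0⁺`.
-/

open Real Complex in
theorem Complex.exists_pow_eq_one_and_prod_pow_eq {ι : Type*} [Fintype ι] {n : ℕ} {b c d : ι → ℕ}
    (hn : n ≠ 0) (hc : ∀ j, c j ≠ 0) (hbcd : ∀ j, n * b j = d j * c j)
    (hd : Finset.univ.gcd (fun j => (d j : ℤ)) = 1) {ζ : ℂ} (hζ : ζ ^ n = 1) :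
    ∃ θ : ι → ℂ, (∀ j, θ j ^ c j = 1) ∧ ∏ j, θ j ^ b j = ζ := by
  have : NeZero n := ⟨hn⟩
  obtain ⟨a, -, rfl⟩ := (isPrimitiveRoot_exp n hn).eq_pow_of_pow_eq_one hζ
  obtain ⟨k, hk⟩ := Finset.gcd_eq_sum_mul Finset.univ (fun j => (d j : ℤ))
  rw [hd] at hk
  -- `ζ = exp (2πi a / n)`; with the Bézout relation `Σ d j k j = 1`,
  -- `θ j = exp (2πi a k j / c j)` works because `b j / c j = d j / n`.
  have hkC : ∑ j, (d j : ℂ) * k j = 1 := by exact_mod_cast hk.symm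
  refine ⟨fun j => exp (2 * π * I * (a * k j) / c j), fun j => ?_, ?_⟩
  · have hcj : (c j : ℂ) ≠ 0 := Nat.cast_ne_zero.2 (hc j)
    rw [← exp_nat_mul, ← exp_int_mul_two_pi_mul_I (a * k j)]
    congr 1
    push_cast
    field_simp
  · have hterm : ∀ j, (b j : ℂ) * (2 * π * I * (a * k j) / c j)
        = 2 * π * I * a / n * ((d j : ℂ) * k j) := fun j => by
      have hcj : (c j : ℂ) ≠ 0 := Nat.cast_ne_zero.2 (hc j)
      have hbcdC : (n : ℂ) * b j = d j * c j := by exact_mod_cast hbcd j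
      rw [show (b j : ℂ) = d j * c j / n by rw [← hbcdC]; field_simp]
      field_simp
    simp_rw [← exp_nat_mul, ← exp_sum, hterm, ← Finset.mul_sum, hkC, mul_one]
    congr 1
    ring

theorem Finset.prod_pow_pow_eq_prod_pow_pow {ι R : Type*} [Fintype ι] [CommMonoid R]
    {n : ℕ} {b c d : ι → ℕ} (hbcd : ∀ j, n * b j = d j * c j) (w : ι → R) :
    (∏ j, w j ^ b j) ^ n = ∏ j, (w j ^ c j) ^ d j := by
  rw [← Finset.prod_pow]
  refine Finset.prod_congr rfl fun j _ => ?_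
  rw [← pow_mul, ← pow_mul, mul_comm (b j), hbcd, mul_comm]

theorem Complex.exists_pow_eq_and_prod_pow_eq {ι : Type*} [Fintype ι] {n : ℕ} {b c d : ι → ℕ}
    (hn : n ≠ 0) (hb : ∀ j, b j ≠ 0) (hc : ∀ j, c j ≠ 0) (hbcd : ∀ j, n * b j = d j * c j)
    (hd : Finset.univ.gcd (fun j => (d j : ℤ)) = 1) {x : ι → ℂ} {y : ℂ}
    (hy : y ^ n = ∏ j, x j ^ d j) :
    ∃ w : ι → ℂ, (∀ j, w j ^ c j = x j) ∧ ∏ j, w j ^ b j = y := by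
  choose w hw using fun j => IsAlgClosed.exists_pow_nat_eq (x j) (Nat.pos_of_ne_zero (hc j))
  have hW : (∏ j, w j ^ b j) ^ n = ∏ j, x j ^ d j := by
    simp only [Finset.prod_pow_pow_eq_prod_pow_pow hbcd, hw]
  by_cases hx : ∃ j, x j = 0
  · obtain ⟨j, hj⟩ := hx
    have hdj : d j ≠ 0 := by
      intro h0
      exact mul_ne_zero hn (hb j) (by rw [hbcd j, h0, zero_mul])
    have hwj : w j = 0 := by rw [← pow_eq_zero_iff (hc j), hw, hj]
    refine ⟨w, hw, ?_⟩
    rw [Finset.prod_eq_zero (Finset.mem_univ j) (by simp [hwj, hb j]), eq_comm,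
      ← pow_eq_zero_iff hn, hy, Finset.prod_eq_zero (Finset.mem_univ j) (by simp [hj, hdj])]
  · simp only [not_exists] at hx
    have hW0 : ∏ j, w j ^ b j ≠ 0 := by
      rw [← pow_ne_zero_iff hn, hW]
      exact Finset.prod_ne_zero_iff.2 fun j _ => pow_ne_zero _ (hx j)
    obtain ⟨θ, hθc, hθb⟩ := Complex.exists_pow_eq_one_and_prod_pow_eq (ζ := y / ∏ j, w j ^ b j)
      hn hc hbcd hd (by rw [div_pow, hy, ← hW, div_self (pow_ne_zero _ hW0)])
    refine ⟨fun j => θ j * w j, fun j => by rw [mul_pow, hθc, one_mul, hw], ?_⟩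
    simp_rw [mul_pow, Finset.prod_mul_distrib, hθb, div_mul_cancel₀ _ hW0]

theorem Finset.gcd_eq_one_of_isLeast {ι : Type*} [Fintype ι] {a : ι → ℚ} {n : ℕ} {d : ι → ℕ}
    (hn : IsLeast {n' : ℕ | 0 < n' ∧ ∀ j, ∃ dj : ℕ, (n' : ℚ) * a j = dj} n)
    (hd : ∀ j, (n : ℚ) * a j = d j) (hsum : ∑ j, d j = n) :
    Finset.univ.gcd (fun j => (d j : ℤ)) = 1 := by
  obtain ⟨e, he⟩ := Int.eq_ofNat_of_zero_le (Int.finsetGcd_nonneg (s := Finset.univ)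
    (f := fun j => (d j : ℤ)))
  have hed : ∀ j, e ∣ d j := fun j => by
    exact_mod_cast he ▸ Finset.gcd_dvd (Finset.mem_univ j)
  have hen : e ∣ n := hsum ▸ Finset.dvd_sum fun j _ => hed j
  have hn0 : 0 < n := hn.1.1
  have he0 : e ≠ 0 := by
    rintro rfl
    exact hn0.ne' (Nat.eq_zero_of_zero_dvd hen)
  have heQ : (e : ℚ) ≠ 0 := Nat.cast_ne_zero.2 he0
  -- dividing `n` and all `d j` by `e` gives a smaller admissible denominator
  have hmem : n / e ∈ {n' : ℕ | 0 < n' ∧ ∀ j, ∃ dj : ℕ, (n' : ℚ) * a j = dj} := by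
    refine ⟨Nat.div_pos (Nat.le_of_dvd hn0 hen) (Nat.pos_of_ne_zero he0), fun j => ⟨d j / e, ?_⟩⟩
    rw [Nat.cast_div hen heQ, Nat.cast_div (hed j) heQ, ← hd j]
    ring
  have he1 : e = 1 := by
    by_contra he1
    exact (Nat.div_lt_self hn0 (by omega)).not_ge (hn.2 hmem)
  rw [he, he1, Nat.cast_one]

theorem tendsto_zero_of_tendsto_pow {α 𝕜 : Type*} [NormedDivisionRing 𝕜] {l : Filter α}
    {z : α → 𝕜} {n : ℕ} (hn : n ≠ 0) (h : Tendsto (fun i => z i ^ n) l (𝓝 0)) :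
    Tendsto z l (𝓝 0) := by
  refine Metric.tendsto_nhds.2 fun ε hε => ?_
  filter_upwards [Metric.tendsto_nhds.1 h (ε ^ n) (by positivity)] with i hi
  rw [dist_zero_right, norm_pow] at hi
  rw [dist_zero_right]
  exact (pow_lt_pow_iff_left₀ (norm_nonneg _) hε.le hn).1 hi

theorem tangentConeAt_image_subset_of_eq_mul {𝕜 R P E : Type*} [AddCommGroup E] [SMul 𝕜 E]
    [TopologicalSpace E] [MulZeroClass R] [TopologicalSpace R] [ContinuousMul R] [T2Space R]
    [Nonempty P] (Φ : P → E) (D : Set P) {F G : E → R} {h : P → R} (hF : Continuous F)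
    (hG : Continuous G) (hh : Tendsto h ((𝓝 0).comap Φ) (𝓝 0))
    (hFG : ∀ t ∈ D, ∀ s : 𝕜, F (s • Φ t) = G (s • Φ t) * h t) :
    tangentConeAt 𝕜 (Φ '' D) 0 ⊆ {v | F v = 0} := by
  intro v hv
  obtain ⟨α, l, hl, s, q, hq0, hqD, hsq⟩ := exists_fun_of_mem_tangentConeAt hv
  have hpre : ∀ i, ∃ t, q i ∈ Φ '' D → t ∈ D ∧ Φ t = q i := fun i => by
    by_cases hi : q i ∈ Φ '' D
    · obtain ⟨t, ht, hΦt⟩ := hi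
      exact ⟨t, fun _ => ⟨ht, hΦt⟩⟩
    · exact ⟨Classical.arbitrary P, fun hi' => absurd hi' hi⟩
  choose t ht using hpre
  have htD : ∀ᶠ i in l, t i ∈ D ∧ Φ (t i) = q i :=
    hqD.mono fun i hi => ht i (by rwa [zero_add] at hi)
  have hht : Tendsto (fun i => h (t i)) l (𝓝 0) :=
    hh.comp (tendsto_comap_iff.2 (hq0.congr' (htD.mono fun i hi => hi.2.symm)))
  have hlim : Tendsto (fun i => F (s i • q i)) l (𝓝 (G v * 0)) :=
    (((hG.tendsto v).comp hsq).mul hht).congr' (htD.mono fun i ⟨hi, hΦ⟩ => by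
      simp only [Function.comp_apply, ← hΦ, hFG _ hi])
  rw [mul_zero] at hlim
  exact tendsto_nhds_unique ((hF.tendsto v).comp hsq) hlim

@[to_additive]
theorem Fintype.prod_sigma_eq_prod_fiber {κ M : Type*} [Fintype κ] {β : κ → Type*}
    [∀ k, Fintype (β k)] [CommMonoid M] {f : (Σ k, β k) → M} (k₀ : κ)
    (hf : ∀ p : Σ k, β k, p.1 ≠ k₀ → f p = 1) :
    ∏ p, f p = ∏ j, f ⟨k₀, j⟩ := by
  rw [Fintype.prod_sigma]
  exact Fintype.prod_eq_single k₀ fun k hk => Fintype.prod_eq_one _ fun j => hf ⟨k, j⟩ hk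

theorem Complex.prod_ofReal_rpow_inv_mul_pow {ι : Type*} [Fintype ι] {x : ℝ} (hx : 0 < x)
    (b c : ι → ℕ) (w : ι → ℂ) :
    ∏ j, (((x ^ (c j : ℝ)⁻¹ : ℝ) : ℂ) * w j) ^ b j
      = ((x ^ ∑ j, (b j : ℝ) / c j : ℝ) : ℂ) * ∏ j, w j ^ b j := by
  simp_rw [mul_pow, Finset.prod_mul_distrib, ← Complex.ofReal_pow, ← Complex.ofReal_prod,
    ← Real.rpow_natCast, ← Real.rpow_mul hx.le, ← Real.rpow_sum_of_pos hx, inv_mul_eq_div]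

theorem Complex.ofReal_rpow_inv_mul_pow {x : ℝ} (hx : 0 ≤ x) {c : ℕ} (hc : c ≠ 0) (z : ℂ) :
    (((x ^ (c : ℝ)⁻¹ : ℝ) : ℂ) * z) ^ c = x * z ^ c := by
  rw [mul_pow, ← Complex.ofReal_pow, ← Real.rpow_natCast, ← Real.rpow_mul hx,
    inv_mul_cancel₀ (Nat.cast_ne_zero.2 hc), Real.rpow_one]

/-- The map `Φ`; `qoY m b c f r` is the image under it of the polydisc of radius `r`. -/
def qoMap {g : ℕ} (m : Fin g → ℕ) (b : Fin g → ((k : Fin g) × Fin (m k)) → ℕ)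
    (c : ((k : Fin g) × Fin (m k)) → ℕ)
    (f : Fin g → (((k : Fin g) × Fin (m k)) → ℂ) → ℂ) (t : ((k : Fin g) × Fin (m k)) → ℂ) :
    (((k : Fin g) × Fin (m k)) → ℂ) × ℂ :=
  (fun p => t p ^ c p, qoPhi m b f t)

/-- The unit `u = φ / M_{k₀}`; the truncated exponents `b k p - b k₀ p` are the true ones when
`M_{k₀}` divides every `M_k`. -/
def qoUnit {g : ℕ} (m : Fin g → ℕ) (b : Fin g → ((k : Fin g) × Fin (m k)) → ℕ)
    (f : Fin g → (((k : Fin g) × Fin (m k)) → ℂ) → ℂ) (k₀ : Fin g)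
    (t : ((k : Fin g) × Fin (m k)) → ℂ) : ℂ :=
  ∑ k, (∏ p, t p ^ (b k p - b k₀ p)) * f k t

def qoInitialCone {g : ℕ} (m : Fin g → ℕ) (k₀ : Fin g) (a : ℂ) (n : ℕ) (d : Fin (m k₀) → ℕ) :
    Set ((((k : Fin g) × Fin (m k)) → ℂ) × ℂ) :=
  {q | q.2 ^ n - a ^ n * ∏ j, q.1 ⟨k₀, j⟩ ^ d j = 0}

section

variable {g : ℕ} {m : Fin g → ℕ} {b : Fin g → ((k : Fin g) × Fin (m k)) → ℕ}
  {c : ((k : Fin g) × Fin (m k)) → ℕ} {f : Fin g → (((k : Fin g) × Fin (m k)) → ℂ) → ℂ}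
  {k₀ : Fin g}

theorem qoPhi_eq_qoMonom_mul_qoUnit (hmono : ∀ k p, b k₀ p ≤ b k p)
    (t : ((k : Fin g) × Fin (m k)) → ℂ) :
    qoPhi m b f t = qoMonom m b k₀ t * qoUnit m b f k₀ t := by
  rw [qoPhi, qoUnit, Finset.mul_sum]
  refine Finset.sum_congr rfl fun k _ => ?_
  rw [← mul_assoc, qoMonom, qoMonom, ← Finset.prod_mul_distrib]
  congr 1
  refine Finset.prod_congr rfl fun p _ => ?_
  rw [← pow_add, Nat.add_sub_cancel' (hmono k p)]

theorem qoUnit_zero (hne : ∀ k ≠ k₀, ∃ p, b k₀ p < b k p) : qoUnit m b f k₀ 0 = f k₀ 0 := by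
  rw [qoUnit, Finset.sum_eq_single_of_mem k₀ (Finset.mem_univ _)]
  · simp
  · intro k _ hk
    obtain ⟨p, hp⟩ := hne k hk
    rw [Finset.prod_eq_zero (Finset.mem_univ p) (by simp [Nat.sub_ne_zero_of_lt hp]), zero_mul]

theorem tendsto_qoUnit (hf : ∀ k, ContinuousAt (f k) 0) (hne : ∀ k ≠ k₀, ∃ p, b k₀ p < b k p) :
    Tendsto (qoUnit m b f k₀) (𝓝 0) (𝓝 (f k₀ 0)) := by
  rw [← qoUnit_zero (f := f) hne]
  exact tendsto_finsetSum _ fun k _ =>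
    (continuous_finsetProd _ fun p _ => (continuous_apply p).pow _).continuousAt.mul (hf k)

theorem qoMonom_eq_prod_fiber (hz : ∀ p : (k : Fin g) × Fin (m k), p.1 ≠ k₀ → b k₀ p = 0)
    (t : ((k : Fin g) × Fin (m k)) → ℂ) :
    qoMonom m b k₀ t = ∏ j, t ⟨k₀, j⟩ ^ b k₀ ⟨k₀, j⟩ :=
  Fintype.prod_sigma_eq_prod_fiber k₀ fun p hp => by rw [hz p hp, pow_zero]

theorem comap_qoMap_nhds_zero_le (hc : ∀ p, c p ≠ 0) :
    (𝓝 0).comap (qoMap m b c f) ≤ 𝓝 0 := by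
  refine tendsto_id'.1 (tendsto_pi_nhds.2 fun p => tendsto_zero_of_tendsto_pow (hc p) ?_)
  have : Continuous fun q : (((k : Fin g) × Fin (m k)) → ℂ) × ℂ => q.1 p := by fun_prop
  exact (this.tendsto' 0 0 rfl).comp tendsto_comap

theorem tangentConeAt_qoY_subset {r : ℝ} {n : ℕ} {d : Fin (m k₀) → ℕ} (hc : ∀ p, c p ≠ 0)
    (hf : ∀ k, ContinuousAt (f k) 0) (hmono : ∀ k p, b k₀ p ≤ b k p)
    (hne : ∀ k ≠ k₀, ∃ p, b k₀ p < b k p)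
    (hz : ∀ p : (k : Fin g) × Fin (m k), p.1 ≠ k₀ → b k₀ p = 0)
    (hbcd : ∀ j, n * b k₀ ⟨k₀, j⟩ = d j * c ⟨k₀, j⟩) (hsum : ∑ j, d j = n) :
    tangentConeAt ℂ (qoY m b c f r) 0 ⊆ qoInitialCone m k₀ (f k₀ 0) n d := by
  have hu : Tendsto (fun t => qoUnit m b f k₀ t ^ n - f k₀ 0 ^ n)
      ((𝓝 0).comap (qoMap m b c f)) (𝓝 0) := by
    simpa using (((tendsto_qoUnit hf hne).pow n).sub_const (f k₀ 0 ^ n)).mono_left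
      (comap_qoMap_nhds_zero_le hc)
  refine tangentConeAt_image_subset_of_eq_mul (qoMap m b c f) _ (by fun_prop)
    (G := fun q => ∏ j, q.1 ⟨k₀, j⟩ ^ d j) (by fun_prop) hu fun t _ s => ?_
  simp only [qoMap, Prod.smul_fst, Prod.smul_snd, Pi.smul_apply, smul_eq_mul]
  rw [Finset.prod_congr rfl fun j _ => mul_pow s _ (d j), Finset.prod_mul_distrib,
    Finset.prod_pow_eq_pow_sum, hsum, ← Finset.prod_pow_pow_eq_prod_pow_pow hbcd,
    ← qoMonom_eq_prod_fiber hz, qoPhi_eq_qoMonom_mul_qoUnit hmono]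
  ring

theorem mem_tangentConeAt_qoY {r : ℝ} (hr : 0 < r) (hc : ∀ p, c p ≠ 0)
    (hf : ∀ k, ContinuousAt (f k) 0) (hmono : ∀ k p, b k₀ p ≤ b k p)
    (hne : ∀ k ≠ k₀, ∃ p, b k₀ p < b k p) (hexp : ∑ p, (b k₀ p : ℝ) / c p = 1)
    (w : ((k : Fin g) × Fin (m k)) → ℂ) :
    (fun p => w p ^ c p, f k₀ 0 * qoMonom m b k₀ w) ∈ tangentConeAt ℂ (qoY m b c f r) 0 := by
  -- the weighted scaling `t_p = x^{1/c p} w_p`, for which `Φ(t) = (x w^c, x M_{k₀}(w) u(t))`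
  set T : ℝ → ((k : Fin g) × Fin (m k)) → ℂ := fun x p => ((x ^ (c p : ℝ)⁻¹ : ℝ) : ℂ) * w p
  have hT : Tendsto T (𝓝[>] 0) (𝓝 0) := tendsto_pi_nhds.2 fun p => by
    have hx : Tendsto (fun x : ℝ => x ^ (c p : ℝ)⁻¹) (𝓝[>] 0) (𝓝 0) := by
      simpa [Real.zero_rpow (inv_ne_zero (Nat.cast_ne_zero.2 (hc p)))] using
        (Real.continuousAt_rpow_const 0 (c p : ℝ)⁻¹ (Or.inr (by positivity))).tendsto.mono_left
          (nhdsWithin_le_nhds (s := Set.Ioi 0))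
    simpa using ((Complex.continuous_ofReal.tendsto 0).comp hx).mul_const (w p)
  have hTY : ∀ᶠ x in 𝓝[>] 0, 0 + qoMap m b c f (T x) ∈ qoY m b c f r := by
    filter_upwards [hT.eventually (Metric.ball_mem_nhds 0 hr)] with x hx
    rw [zero_add]
    exact ⟨T x, by simpa [pi_norm_lt_iff hr] using hx, rfl⟩
  have hscale : ∀ x ∈ Set.Ioi (0 : ℝ), ((x⁻¹ : ℝ) : ℂ) • qoMap m b c f (T x)
      = (fun p => w p ^ c p, qoMonom m b k₀ w * qoUnit m b f k₀ (T x)) := fun x hx => by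
    have hx0 : (x : ℂ) ≠ 0 := Complex.ofReal_ne_zero.2 (ne_of_gt hx)
    ext p
    · simp [qoMap, T, Complex.ofReal_rpow_inv_mul_pow (le_of_lt hx) (hc p), hx0]
    · simp [qoMap, T, qoPhi_eq_qoMonom_mul_qoUnit hmono, qoMonom,
        Complex.prod_ofReal_rpow_inv_mul_pow hx, hexp]
      field_simp
  have hlim : Tendsto (fun x : ℝ => ((x⁻¹ : ℝ) : ℂ) • qoMap m b c f (T x)) (𝓝[>] 0)
      (𝓝 (fun p => w p ^ c p, f k₀ 0 * qoMonom m b k₀ w)) := by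
    rw [mul_comm]
    exact Tendsto.congr' (eventuallyEq_of_mem self_mem_nhdsWithin fun x hx => (hscale x hx).symm)
      (tendsto_const_nhds.prodMk_nhds (tendsto_const_nhds.mul ((tendsto_qoUnit hf hne).comp hT)))
  have hnorm : Tendsto (fun x : ℝ => ‖((x⁻¹ : ℝ) : ℂ)‖) (𝓝[>] 0) atTop := by
    simpa [Function.comp_def] using tendsto_abs_atTop_atTop.comp (tendsto_inv_nhdsGT_zero (𝕜 := ℝ))
  exact mem_tangentConeAt_of_seq _ _ _ (tangentConeAt.lim_zero _ hnorm hlim) hTY hlim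

theorem qoInitialCone_subset_tangentConeAt {r : ℝ} {n : ℕ} {d : Fin (m k₀) → ℕ} (hr : 0 < r)
    (hc : ∀ p, c p ≠ 0) (hb : ∀ j, b k₀ ⟨k₀, j⟩ ≠ 0) (hf : ∀ k, ContinuousAt (f k) 0)
    (hf0 : f k₀ 0 ≠ 0) (hmono : ∀ k p, b k₀ p ≤ b k p) (hne : ∀ k ≠ k₀, ∃ p, b k₀ p < b k p)
    (hz : ∀ p : (k : Fin g) × Fin (m k), p.1 ≠ k₀ → b k₀ p = 0) (hn : n ≠ 0)
    (hbcd : ∀ j, n * b k₀ ⟨k₀, j⟩ = d j * c ⟨k₀, j⟩) (hsum : ∑ j, d j = n)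
    (hgcd : Finset.univ.gcd (fun j => (d j : ℤ)) = 1) :
    qoInitialCone m k₀ (f k₀ 0) n d ⊆ tangentConeAt ℂ (qoY m b c f r) 0 := by
  rintro ⟨x, y⟩ hxy
  have hy : (y / f k₀ 0) ^ n = ∏ j, x ⟨k₀, j⟩ ^ d j := by
    rw [div_pow, div_eq_iff (pow_ne_zero _ hf0), mul_comm, ← sub_eq_zero]
    exact hxy
  obtain ⟨w₀, hw₀c, hw₀b⟩ :=
    Complex.exists_pow_eq_and_prod_pow_eq hn hb (fun j => hc _) hbcd hgcd hy
  choose w hw using fun p => IsAlgClosed.exists_pow_nat_eq (x p) (Nat.pos_of_ne_zero (hc p))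
  let w' := Sigma.uncurry (Function.update (Sigma.curry w : (k : Fin g) → Fin (m k) → ℂ) k₀ w₀)
  have hw'c : ∀ p, w' p ^ c p = x p := by
    rintro ⟨k, j⟩
    by_cases hk : k = k₀
    · subst hk
      simp [w', Sigma.uncurry, hw₀c]
    · simp [w', Sigma.uncurry, hk, Sigma.curry, hw]
  have hexp : ∑ p, (b k₀ p : ℝ) / c p = 1 := by
    rw [Fintype.sum_sigma_eq_sum_fiber k₀ fun p hp => by simp [hz p hp]]
    have hnR : (n : ℝ) ≠ 0 := Nat.cast_ne_zero.2 hn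
    have hterm : ∀ j, (b k₀ ⟨k₀, j⟩ : ℝ) / c ⟨k₀, j⟩ = d j / n := fun j => by
      rw [div_eq_div_iff (Nat.cast_ne_zero.2 (hc _)) hnR, mul_comm]
      exact_mod_cast hbcd j
    simp_rw [hterm, ← Finset.sum_div]
    rw [← Nat.cast_sum, hsum, div_self hnR]
  convert mem_tangentConeAt_qoY hr hc hf hmono hne hexp w' using 2
  · exact funext fun p => (hw'c p).symm
  · simp [qoMonom_eq_prod_fiber hz, w', Sigma.uncurry, hw₀b, mul_div_cancel₀ _ hf0]

theorem tangentConeAt_qoY_eq_qoInitialCone {r : ℝ} {n : ℕ} {d : Fin (m k₀) → ℕ} (hr : 0 < r)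
    (hk₀ : ∀ k, k₀ ≤ k) (hm : ∀ k, 0 < m k) (hc : ∀ p, 0 < c p)
    (hbpos : ∀ (k : Fin g) (p : (k : Fin g) × Fin (m k)), p.1 ≤ k → 0 < b k p)
    (hbzero : ∀ (k : Fin g) (p : (k : Fin g) × Fin (m k)), k < p.1 → b k p = 0)
    (hbmono : ∀ (k k' : Fin g) (p : (k : Fin g) × Fin (m k)), k ≤ k' → b k p ≤ b k' p)
    (hf : ∀ k, ContinuousAt (f k) 0) (hf0 : f k₀ 0 ≠ 0)
    (heq : ∑ j, qoExp m b c k₀ ⟨k₀, j⟩ = 1)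
    (hd : ∀ j, (n : ℚ) * qoExp m b c k₀ ⟨k₀, j⟩ = d j)
    (hn : IsLeast {n' : ℕ | 0 < n' ∧ ∀ j, ∃ dj : ℕ, (n' : ℚ) * qoExp m b c k₀ ⟨k₀, j⟩ = dj} n) :
    tangentConeAt ℂ (qoY m b c f r) 0 = qoInitialCone m k₀ (f k₀ 0) n d := by
  have hz : ∀ p : (k : Fin g) × Fin (m k), p.1 ≠ k₀ → b k₀ p = 0 :=
    fun p hp => hbzero _ _ ((hk₀ p.1).lt_of_ne' hp)
  have hne : ∀ k ≠ k₀, ∃ p, b k₀ p < b k p :=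
    fun k hk => ⟨⟨k, ⟨0, hm k⟩⟩, by rw [hz _ hk]; exact hbpos _ _ le_rfl⟩
  have hmono : ∀ k p, b k₀ p ≤ b k p := fun k p => hbmono _ _ p (hk₀ k)
  have hbcd : ∀ j, n * b k₀ ⟨k₀, j⟩ = d j * c ⟨k₀, j⟩ := fun j => by
    have := hd j
    rw [qoExp, mul_div_assoc', div_eq_iff (Nat.cast_ne_zero.2 (hc _).ne')] at this
    exact_mod_cast this
  have hsum : ∑ j, d j = n := by
    have : ∑ j, (d j : ℚ) = n := by simp_rw [← hd, ← Finset.mul_sum, heq, mul_one]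
    exact_mod_cast this
  have hc' : ∀ p, c p ≠ 0 := fun p => (hc p).ne'
  refine subset_antisymm (tangentConeAt_qoY_subset hc' hf hmono hne hz hbcd hsum) ?_
  exact qoInitialCone_subset_tangentConeAt hr hc' (fun j => (hbpos k₀ ⟨k₀, j⟩ le_rfl).ne') hf hf0
    hmono hne hz hn.1.1.ne' hbcd hsum (Finset.gcd_eq_one_of_isLeast hn hd hsum)

end

theorem qo_tangent_cone_of_sum_eq_one
    {g : ℕ} (hg : 0 < g) (m : Fin g → ℕ) (hm : ∀ k, 0 < m k)
    (b : Fin g → ((k : Fin g) × Fin (m k)) → ℕ)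
    (c : ((k : Fin g) × Fin (m k)) → ℕ) (hc : ∀ p, 0 < c p)
    (hbpos : ∀ (k : Fin g) (p : (k : Fin g) × Fin (m k)), p.1 ≤ k → 0 < b k p)
    (hbzero : ∀ (k : Fin g) (p : (k : Fin g) × Fin (m k)), k < p.1 → b k p = 0)
    (hbmono : ∀ (k k' : Fin g) (p : (k : Fin g) × Fin (m k)), k ≤ k' → b k p ≤ b k' p)
    (f : Fin g → (((k : Fin g) × Fin (m k)) → ℂ) → ℂ)
    (hf : ∀ k, AnalyticAt ℂ (f k) 0) (hf0 : ∀ k, f k 0 ≠ 0)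
    (heq : ∑ j : Fin (m ⟨0, hg⟩), qoExp m b c ⟨0, hg⟩ ⟨⟨0, hg⟩, j⟩ = 1)
    (cd : ℕ) (d : Fin (m ⟨0, hg⟩) → ℕ)
    (hd : ∀ j, (cd : ℚ) * qoExp m b c ⟨0, hg⟩ ⟨⟨0, hg⟩, j⟩ = (d j : ℚ))
    (hcd : IsLeast {c' : ℕ | 0 < c' ∧
      ∀ j, ∃ dj : ℕ, (c' : ℚ) * qoExp m b c ⟨0, hg⟩ ⟨⟨0, hg⟩, j⟩ = (dj : ℚ)} cd) :
    ∃ r₀ > (0 : ℝ), ∀ r : ℝ, 0 < r → r ≤ r₀ →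
      tangentConeAt ℂ (qoY m b c f r) 0 =
        {q : (((k : Fin g) × Fin (m k)) → ℂ) × ℂ |
          q.2 ^ cd - f ⟨0, hg⟩ 0 ^ cd *
            ∏ j : Fin (m ⟨0, hg⟩), q.1 ⟨⟨0, hg⟩, j⟩ ^ d j = 0} :=
  ⟨1, one_pos, fun _ hr _ => tangentConeAt_qoY_eq_qoInitialCone hr (fun k => Nat.zero_le k) hm hc
    hbpos hbzero hbmono (fun k => (hf k).continuousAt) (hf0 _) heq hd hcd⟩

end
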